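/- Let A be a left brace of cardinality p^n with p prime and p > n+1. Then for every natural number i, the subset p^i·A = {p^i·a : a ∈ A} is an ideal of A, and moreover p^i·A equals A^{∘p^i}, the subgroup of the multiplicative group (A,∘) generated by the p^i-th powers a^{∘p^i} for a ∈ A. -/

import Mathlib

class LeftBrace (A : Type*) extends AddCommGroup A where
  circ : A → A → A
  circ_assoc : ∀ a b c : A, circ (circ a b) c = circ a (circ b c)
  circ_zero : ∀ a : A, circ a 0 = a
  zero_circ : ∀ a : A, circ 0 a = a
  inv : A → A
  circ_inv : ∀ a : A, circ a (inv a) = 0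
  inv_circ : ∀ a : A, circ (inv a) a = 0
  circ_add : ∀ a b c : A, circ a (b + c) + a = circ a b + circ a c

namespace LeftBrace

variable {A : Type*} [LeftBrace A]

def star (a b : A) : A := circ a b - a - b

def subStarSet (S T : Set A) : AddSubgroup A :=
  AddSubgroup.closure {x | ∃ a ∈ S, ∃ b ∈ T, x = star a b}

def subStar (S T : AddSubgroup A) : AddSubgroup A := subStarSet (S : Set A) (T : Set A)

/-- `leftPow A m` is `A^{m+1}` of the left chain `A^1 = A`, `A^{i+1} = A * A^i`. -/
def leftPow (A : Type*) [LeftBrace A] : ℕ → AddSubgroup A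
  | 0 => ⊤
  | m + 1 => subStar ⊤ (leftPow A m)

def leftIdx (A : Type*) [LeftBrace A] (m : ℕ) : AddSubgroup A := leftPow A (m - 1)

/-- `rightPow A m` is `A^{(m+1)}` of the right chain `A^{(1)} = A`, `A^{(i+1)} = A^{(i)} * A`. -/
def rightPow (A : Type*) [LeftBrace A] : ℕ → AddSubgroup A
  | 0 => ⊤
  | m + 1 => subStar (rightPow A m) ⊤

def rightIdx (A : Type*) [LeftBrace A] (m : ℕ) : AddSubgroup A := rightPow A (m - 1)

def strongPow (A : Type*) [LeftBrace A] : ℕ → AddSubgroup A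
  | 0 => ⊤
  | m + 1 => ⨆ j : Fin (m + 1), subStar (strongPow A j) (strongPow A (m - j))
  termination_by m => m
  decreasing_by
  · exact j.isLt
  · exact Nat.lt_succ_of_le (Nat.sub_le m j)

def strongIdx (A : Type*) [LeftBrace A] (m : ℕ) : AddSubgroup A := strongPow A (m - 1)

/-- An ideal of a left brace, as a subset: closed under the additive group
operations, absorbing under `*` on both sides, and normal in `(A, ∘)`. -/
def IsIdeal (I : Set A) : Prop :=
  (0 : A) ∈ I ∧ (∀ x ∈ I, ∀ y ∈ I, x + y ∈ I) ∧ (∀ x ∈ I, -x ∈ I) ∧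
  (∀ a : A, ∀ i ∈ I, star a i ∈ I) ∧ (∀ a : A, ∀ i ∈ I, star i a ∈ I) ∧
  (∀ a : A, ∀ i ∈ I, circ (circ a i) (inv a) ∈ I)

/-- `circPow a m` is the product of `m` copies of `a` in the group `(A, ∘)`. -/
def circPow (a : A) : ℕ → A
  | 0 => 0
  | m + 1 => circ a (circPow a m)

/-- Membership in the subgroup of `(A, ∘)` generated by a subset. -/
inductive circClosure (S : Set A) : A → Prop
  | of : ∀ x ∈ S, circClosure S x
  | zero : circClosure S 0
  | mul : ∀ x y : A, circClosure S x → circClosure S y → circClosure S (circ x y)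
  | inv : ∀ x : A, circClosure S x → circClosure S (inv x)

end LeftBrace

/-!
Write `q = p ^ i`. Rump's theorem, in the form "the series `F₀ = 0`,
`F_{k+1} = {x | a * x ∈ F_k for all a}` reaches `A` after `n` steps" (it grows strictly until it
is `A`, by the fixed-point theorem for the `p`-group `(A, ∘)` acting on `A / F_k`), makes every
product `a * (a * ⋯ * (a * x))` with `n` stars vanish. So in the expansions
`a^{∘q} = ∑ C(q,k) a_k` and `a^{∘q} * b = ∑ C(q,k) e_k` only the terms with `k ≤ n < p`
survive, and `q ∣ C(q,k)` for them: the subgroup generated by the `q`-th powers lies in `qA`,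
and its elements `g` satisfy `g * b ∈ qA`. Conversely, `x^{∘q} = q x + q d` with `d ∈ F_j` when
`x ∈ F_{j+1}`, so descending induction along the series puts `qA` inside that subgroup.
Normality comes from `(a ∘ j) ∘ a⁻ = λ_a(j) + λ_a(j * a⁻)`.
-/

open Finset

theorem Nat.dvd_choose_of_coprime {m k : ℕ} (hk : 0 < k) (h : m.Coprime k) :
    m ∣ m.choose k := by
  obtain _ | m := m
  · simp [Nat.choose_eq_zero_of_lt hk]
  obtain ⟨k, rfl⟩ := Nat.exists_eq_add_one_of_ne_zero hk.ne'
  exact h.dvd_of_dvd_mul_right ⟨_, (Nat.add_one_mul_choose_eq m k).symm⟩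

theorem Nat.Prime.pow_dvd_choose_pow {p k : ℕ} (hp : p.Prime) (hk : 0 < k) (hkp : k < p)
    (i : ℕ) : p ^ i ∣ (p ^ i).choose k :=
  Nat.dvd_choose_of_coprime hk ((Nat.coprime_of_lt_prime hk.ne' hkp hp).pow_left i)

theorem Nat.Prime.dvd_of_dvd_pow_of_ne_one {p n d : ℕ} (hp : p.Prime) (hd : d ∣ p ^ n)
    (h1 : d ≠ 1) : p ∣ d := by
  obtain ⟨k, -, rfl⟩ := (Nat.dvd_prime_pow hp).1 hd
  exact dvd_pow_self p (by rintro rfl; exact h1 (pow_zero p))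

namespace AddSubgroup

variable {G : Type*} [AddGroup G] {p n : ℕ}

theorem prime_mul_card_le_card_of_lt (hp : p.Prime) (hG : Nat.card G = p ^ n)
    {H K : AddSubgroup G} (hHK : H < K) : p * Nat.card H ≤ Nat.card K := by
  have : Finite G := Nat.finite_of_card_ne_zero (hG ▸ (pow_pos hp.pos n).ne')
  obtain ⟨m, hm⟩ := card_dvd_of_le hHK.le
  have hm1 : m ≠ 1 := by
    rintro rfl
    exact hHK.ne (eq_of_le_of_card_ge hHK.le (by rw [hm, mul_one]))
  have hmG : m ∣ p ^ n := (Dvd.intro_left _ hm.symm).trans (hG ▸ K.card_addSubgroup_dvd_card)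
  have hpm : p ≤ m := Nat.le_of_dvd (Nat.pos_of_dvd_of_pos hmG (pow_pos hp.pos n))
    (hp.dvd_of_dvd_pow_of_ne_one hmG hm1)
  rw [hm, mul_comm]
  exact Nat.mul_le_mul_left _ hpm

theorem eq_top_of_monotone_of_ne_succ (hp : p.Prime) (hG : Nat.card G = p ^ n)
    (F : ℕ → AddSubgroup G) (hmono : Monotone F)
    (hgrow : ∀ k, F k ≠ ⊤ → F k ≠ F (k + 1)) : F n = ⊤ := by
  have : Finite G := Nat.finite_of_card_ne_zero (hG ▸ (pow_pos hp.pos n).ne')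
  have key : ∀ k, F k = ⊤ ∨ p ^ k ≤ Nat.card (F k) := by
    intro k
    induction k with
    | zero => exact Or.inr Nat.card_pos
    | succ k ih =>
      by_cases htop : F k = ⊤
      · exact Or.inl (top_unique (htop ▸ hmono k.le_succ))
      · refine Or.inr ?_
        calc p ^ (k + 1) = p * p ^ k := pow_succ' p k
          _ ≤ p * Nat.card (F k) := Nat.mul_le_mul_left p (ih.resolve_left htop)
          _ ≤ Nat.card (F (k + 1)) := prime_mul_card_le_card_of_lt hp hG
                (lt_of_le_of_ne (hmono k.le_succ) (hgrow k htop))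
  exact (key n).elim id fun h => eq_top_of_le_card _ (hG ▸ h)

end AddSubgroup

section

variable {M : Type*} [AddCommMonoid M]

/-- `binomialSum σ m x = (((1 + σ) ^ m - 1) / σ) x`. -/
def binomialSum (σ : M →+ M) (m : ℕ) (x : M) : M :=
  ∑ k ∈ range m, m.choose (k + 1) • σ^[k] x

theorem binomialSum_succ (σ : M →+ M) (m : ℕ) (x : M) :
    binomialSum σ (m + 1) x = x + binomialSum σ m x + σ (binomialSum σ m x) := by
  have hlow : ∑ k ∈ range (m + 1), m.choose k • σ^[k] x = x + σ (binomialSum σ m x) := by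
    rw [sum_range_succ', binomialSum, map_sum, add_comm]
    simp [Function.iterate_succ_apply']
  have hhigh : ∑ k ∈ range (m + 1), m.choose (k + 1) • σ^[k] x = binomialSum σ m x := by
    simp [sum_range_succ, binomialSum]
  simp only [binomialSum, Nat.choose_succ_succ, add_smul, sum_add_distrib] at hlow hhigh ⊢
  rw [hlow, hhigh]
  abel

/-- Only the terms with `k < n` survive, and for `0 < k ≤ n < p` we have
`p ^ i ∣ (p ^ i).choose k`. -/
theorem binomialSum_prime_pow {p n : ℕ} (hp : p.Prime) (hn : n < p) (σ : M →+ M)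
    (S : AddSubmonoid M) (hS : ∀ y ∈ S, σ y ∈ S) {x : M} (hx : x ∈ S) (hσx : σ^[n] x = 0)
    (i : ℕ) : ∃ c ∈ S, binomialSum σ (p ^ i) x = p ^ i • (x + σ c) := by
  obtain ⟨N, hN⟩ := Nat.exists_eq_add_one_of_ne_zero (pow_pos hp.pos i).ne'
  have hmem : ∀ k, σ^[k] x ∈ S := by
    intro k
    induction k with
    | zero => exact hx
    | succ k ih => rw [Function.iterate_succ_apply']; exact hS _ ih
  have hvanish : ∀ k, n ≤ k → σ^[k] x = 0 := by
    intro k hk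
    rw [← Nat.sub_add_cancel hk, Function.iterate_add_apply, hσx, iterate_map_zero]
  have hterm : ∀ k, p ^ i • ((p ^ i).choose (k + 1 + 1) / p ^ i) • σ^[k + 1] x
      = (p ^ i).choose (k + 1 + 1) • σ^[k + 1] x := by
    intro k
    rcases lt_or_ge (k + 1) n with hk | hk
    · rw [smul_smul,
        Nat.mul_div_cancel' (hp.pow_dvd_choose_pow (by omega) (by omega) i)]
    · simp [hvanish _ hk]
  refine ⟨∑ k ∈ range N, ((p ^ i).choose (k + 1 + 1) / p ^ i) • σ^[k] x,
    sum_mem fun k _ => AddSubmonoid.nsmul_mem _ (hmem k) _, ?_⟩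
  rw [binomialSum, hN, sum_range_succ', ← hN, smul_add, map_sum, smul_sum]
  simp only [map_nsmul, ← Function.iterate_succ_apply' σ, hterm, zero_add,
    Nat.choose_one_right, Function.iterate_zero_apply]
  exact add_comm _ _

end

namespace LeftBrace

variable {A : Type*} [LeftBrace A]

def lam (a : A) : A →+ A where
  toFun b := circ a b - a
  map_zero' := by rw [circ_zero, sub_self]
  map_add' b c := by
    rw [eq_sub_of_add_eq (circ_add a b c)]
    abel

theorem lam_apply (a b : A) : lam a b = circ a b - a := rfl

def starHom (a : A) : A →+ A := lam a - AddMonoidHom.id A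

theorem starHom_apply (a b : A) : starHom a b = star a b := rfl

theorem star_nsmul (a : A) (m : ℕ) (b : A) : star a (m • b) = m • star a b :=
  map_nsmul (starHom a) m b

theorem zero_star (b : A) : star 0 b = 0 := by
  rw [star, zero_circ, sub_zero, sub_self]

theorem lam_eq_star_add (a b : A) : lam a b = star a b + b := by
  rw [lam_apply, star, sub_add_cancel]

theorem circ_eq_add_lam (a b : A) : circ a b = a + lam a b := by
  rw [lam_apply, add_sub_cancel]

theorem circ_eq_add_add_star (a b : A) : circ a b = a + b + star a b := by
  rw [circ_eq_add_lam, lam_eq_star_add]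
  abel

theorem lam_zero (b : A) : lam 0 b = b := by
  rw [lam_apply, zero_circ, sub_zero]

theorem lam_circ (a b c : A) : lam (circ a b) c = lam a (lam b c) := by
  rw [lam_apply, circ_assoc, circ_eq_add_lam a (circ b c), circ_eq_add_lam b c, map_add,
    circ_eq_add_lam a b]
  abel

theorem star_circ (a b c : A) : star (circ a b) c = star a (star b c) + star a c + star b c := by
  have h := lam_circ a b c
  rw [lam_eq_star_add, lam_eq_star_add b, map_add, lam_eq_star_add, lam_eq_star_add a c] at h
  rw [eq_sub_of_add_eq h]
  abel

theorem inv_eq_neg_lam (a : A) : inv a = -lam (inv a) a := by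
  rw [lam_apply, inv_circ, zero_sub, neg_neg]

theorem circ_lam_inv (a b : A) : circ a (lam (inv a) b) = a + b := by
  rw [circ_eq_add_lam, ← lam_circ, circ_inv, lam_zero]

theorem circ_circ_inv (a b : A) :
    circ (circ a b) (inv a) = lam a b + lam a (star b (inv a)) := by
  rw [circ_assoc, circ_eq_add_lam, circ_eq_add_add_star, map_add, map_add, lam_apply a (inv a),
    circ_inv]
  abel

def CircGroup (A : Type*) [LeftBrace A] := A

instance : Group (CircGroup A) where
  mul := circ (A := A)
  mul_assoc := circ_assoc (A := A)
  one := (0 : A)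
  one_mul := zero_circ (A := A)
  mul_one := circ_zero (A := A)
  inv := inv (A := A)
  inv_mul_cancel := inv_circ (A := A)

abbrev quotientLamAction (F : AddSubgroup A) (hF : ∀ a, ∀ x ∈ F, star a x ∈ F) :
    MulAction (CircGroup A) (A ⧸ F) where
  smul (a : A) := QuotientAddGroup.map F F (lam a) fun x hx => by
    rw [AddSubgroup.mem_comap, lam_eq_star_add]
    exact add_mem (hF a x hx) hx
  one_smul q := QuotientAddGroup.induction_on q fun x => congrArg _ (lam_zero x)
  mul_smul a b q := QuotientAddGroup.induction_on q fun x => congrArg _ (lam_circ (A := A) a b x)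

/-- The `p`-group `(A, ∘)` acts on `A ⧸ F`, whose order is divisible by `p`, so it has a fixed
point besides `0`. -/
theorem exists_forall_star_mem_of_ne_top {p n : ℕ} (hp : p.Prime) (hcard : Nat.card A = p ^ n)
    (F : AddSubgroup A) (hF : ∀ a, ∀ x ∈ F, star a x ∈ F) (hne : F ≠ ⊤) :
    ∃ y ∉ F, ∀ a, star a y ∈ F := by
  have : Fact p.Prime := ⟨hp⟩
  have : Finite A := Nat.finite_of_card_ne_zero (hcard ▸ (pow_pos hp.pos n).ne')
  let := quotientLamAction F hF
  have hG : IsPGroup p (CircGroup A) := IsPGroup.of_card hcard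
  have hdvd : p ∣ Nat.card (A ⧸ F) :=
    hp.dvd_of_dvd_pow_of_ne_one (hcard ▸ F.index_dvd_card) (mt AddSubgroup.index_eq_one.1 hne)
  have h0 : (0 : A ⧸ F) ∈ MulAction.fixedPoints (CircGroup A) (A ⧸ F) := fun _ => map_zero _
  obtain ⟨q, hq, hq0⟩ := hG.exists_fixed_point_of_prime_dvd_card_of_fixed_point _ hdvd h0
  induction q using QuotientAddGroup.induction_on with | H y => ?_
  refine ⟨y, fun hy => hq0 ((QuotientAddGroup.eq_zero_iff y).2 hy).symm, fun a => ?_⟩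
  rw [← starHom_apply, starHom, AddMonoidHom.sub_apply, ← QuotientAddGroup.eq_iff_sub_mem]
  exact hq a

/-- `F_{k+1} / F_k` is the set of `λ`-fixed points of `A / F_k`. -/
def fixSeries (A : Type*) [LeftBrace A] : ℕ → AddSubgroup A
  | 0 => ⊥
  | k + 1 => ⨅ a : A, (fixSeries A k).comap (starHom a)

theorem mem_fixSeries_succ {k : ℕ} {x : A} :
    x ∈ fixSeries A (k + 1) ↔ ∀ a, star a x ∈ fixSeries A k := by
  simp [fixSeries, starHom_apply]

theorem fixSeries_mono : Monotone (fixSeries A) := by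
  refine monotone_nat_of_le_succ fun k => ?_
  induction k with
  | zero => exact bot_le
  | succ k ih => exact fun x hx => mem_fixSeries_succ.2 fun a => ih (mem_fixSeries_succ.1 hx a)

theorem star_mem_fixSeries (a : A) {k : ℕ} {x : A} (hx : x ∈ fixSeries A k) :
    star a x ∈ fixSeries A k := by
  cases k with
  | zero => rw [fixSeries, AddSubgroup.mem_bot] at hx ⊢; rw [hx, ← starHom_apply, map_zero]
  | succ k => exact fixSeries_mono k.le_succ (mem_fixSeries_succ.1 hx a)

theorem lam_mem_fixSeries (a : A) {k : ℕ} {x : A} (hx : x ∈ fixSeries A k) :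
    lam a x ∈ fixSeries A k := by
  rw [lam_eq_star_add]
  exact add_mem (star_mem_fixSeries a hx) hx

theorem fixSeries_eq_top {p n : ℕ} (hp : p.Prime) (hcard : Nat.card A = p ^ n) :
    fixSeries A n = ⊤ := by
  refine AddSubgroup.eq_top_of_monotone_of_ne_succ hp hcard _ fixSeries_mono fun k hk heq => ?_
  obtain ⟨y, hy, hstar⟩ := exists_forall_star_mem_of_ne_top hp hcard _
    (fun a _ => star_mem_fixSeries a) hk
  exact hy (heq ▸ mem_fixSeries_succ.2 hstar)

theorem iterate_starHom_mem_fixSeries (a : A) {j k : ℕ} {x : A} (hx : x ∈ fixSeries A (j + k)) :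
    (starHom a)^[k] x ∈ fixSeries A j := by
  induction k generalizing x with
  | zero => exact hx
  | succ k ih =>
    rw [Function.iterate_succ_apply, starHom_apply]
    exact ih (mem_fixSeries_succ.1 hx a)

theorem circPow_eq_binomialSum (a : A) (m : ℕ) : circPow a m = binomialSum (starHom a) m a := by
  induction m with
  | zero => simp [circPow, binomialSum]
  | succ m ih => rw [circPow, circ_eq_add_add_star, ih, binomialSum_succ, starHom_apply]

theorem star_circPow_eq_binomialSum (a b : A) (m : ℕ) :
    star (circPow a m) b = binomialSum (starHom a) m (star a b) := by
  induction m with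
  | zero => simp [circPow, binomialSum, zero_star]
  | succ m ih =>
    rw [circPow, star_circ, ih, binomialSum_succ, starHom_apply]
    abel

theorem iterate_starHom_eq_zero {n : ℕ} (hA : fixSeries A n = ⊤) (a x : A) :
    (starHom a)^[n] x = 0 := by
  have h := iterate_starHom_mem_fixSeries a (j := 0) (x := x) (by rw [zero_add, hA]; trivial)
  rwa [fixSeries, AddSubgroup.mem_bot] at h

variable {p n : ℕ}

theorem exists_circPow_prime_pow_eq_smul (hp : p.Prime) (hn : n < p) (hA : fixSeries A n = ⊤)
    (i : ℕ) (a : A) : ∃ c, circPow a (p ^ i) = p ^ i • c := by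
  obtain ⟨c, -, hc⟩ := binomialSum_prime_pow hp hn (starHom a) ⊤ (fun _ _ => trivial) trivial
    (iterate_starHom_eq_zero hA a a) i
  exact ⟨_, (circPow_eq_binomialSum a _).trans hc⟩

theorem exists_star_circPow_prime_pow_eq_smul (hp : p.Prime) (hn : n < p) (hA : fixSeries A n = ⊤)
    (i : ℕ) (a b : A) : ∃ c, star (circPow a (p ^ i)) b = p ^ i • c := by
  obtain ⟨c, -, hc⟩ := binomialSum_prime_pow hp hn (starHom a) ⊤ (fun _ _ => trivial) trivial
    (iterate_starHom_eq_zero hA a (star a b)) i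
  exact ⟨_, (star_circPow_eq_binomialSum a b _).trans hc⟩

theorem exists_circPow_prime_pow_eq_smul_add (hp : p.Prime) (hn : n < p) (hA : fixSeries A n = ⊤)
    (i : ℕ) {j : ℕ} {x : A} (hx : x ∈ fixSeries A (j + 1)) :
    ∃ d ∈ fixSeries A j, circPow x (p ^ i) = p ^ i • (x + d) := by
  obtain ⟨c, hc, h⟩ := binomialSum_prime_pow hp hn (starHom x)
    (fixSeries A (j + 1)).toAddSubmonoid (fun _ => star_mem_fixSeries x) hx
    (iterate_starHom_eq_zero hA x x) i
  exact ⟨star x c, mem_fixSeries_succ.1 hc x, (circPow_eq_binomialSum x _).trans h⟩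

def circPowers (m : ℕ) : Set A := {y | ∃ a, y = circPow a m}

/-- Descending induction along `fixSeries`: for `x ∈ F_{j+1}` and `u = x^{∘q}` we have
`u = q (x + d)` with `d ∈ F_j`, hence `q x = u ∘ q λ_{u⁻}(-d)` and `λ_{u⁻}(-d) ∈ F_j`. -/
theorem circClosure_circPowers_smul (hp : p.Prime) (hn : n < p) (hA : fixSeries A n = ⊤)
    (i : ℕ) (x : A) : circClosure (circPowers (p ^ i)) (p ^ i • x) := by
  suffices h : ∀ j, ∀ x ∈ fixSeries A j, circClosure (circPowers (p ^ i)) (p ^ i • x) from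
    h n x (hA ▸ AddSubgroup.mem_top x)
  intro j
  induction j with
  | zero =>
    intro x hx
    rw [fixSeries, AddSubgroup.mem_bot] at hx
    rw [hx, smul_zero]
    exact .zero
  | succ j ih =>
    intro x hx
    obtain ⟨d, hd, hu⟩ := exists_circPow_prime_pow_eq_smul_add hp hn hA i hx
    have key : circ (circPow x (p ^ i)) (p ^ i • lam (inv (circPow x (p ^ i))) (-d))
        = p ^ i • x := by
      rw [← map_nsmul, circ_lam_inv, hu, smul_neg, smul_add, add_neg_cancel_right]
    rw [← key]
    exact .mul _ _ (.of _ ⟨x, rfl⟩) (ih _ (lam_mem_fixSeries _ (neg_mem hd)))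

theorem exists_eq_smul_of_circClosure (hp : p.Prime) (hn : n < p) (hA : fixSeries A n = ⊤)
    (i : ℕ) {x : A} (hx : circClosure (circPowers (p ^ i)) x) : ∃ c, x = p ^ i • c := by
  induction hx with
  | of y hy =>
    obtain ⟨a, rfl⟩ := hy
    exact exists_circPow_prime_pow_eq_smul hp hn hA i a
  | zero => exact ⟨0, (smul_zero _).symm⟩
  | mul x y _ _ hx hy =>
    obtain ⟨a, rfl⟩ := hx
    obtain ⟨b, rfl⟩ := hy
    exact ⟨a + lam (p ^ i • a) b, by rw [circ_eq_add_lam, map_nsmul, smul_add]⟩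
  | inv x _ hx =>
    obtain ⟨a, rfl⟩ := hx
    exact ⟨-lam (inv (p ^ i • a)) a, (inv_eq_neg_lam _).trans (by rw [map_nsmul, smul_neg])⟩

theorem exists_star_eq_smul_of_circClosure (hp : p.Prime) (hn : n < p) (hA : fixSeries A n = ⊤)
    (i : ℕ) {g : A} (hg : circClosure (circPowers (p ^ i)) g) (b : A) :
    ∃ c, star g b = p ^ i • c := by
  induction hg generalizing b with
  | of y hy =>
    obtain ⟨a, rfl⟩ := hy
    exact exists_star_circPow_prime_pow_eq_smul hp hn hA i a b
  | zero => exact ⟨0, by rw [zero_star, smul_zero]⟩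
  | mul x y _ _ hx hy =>
    obtain ⟨c₁, hc₁⟩ := hx (star y b)
    obtain ⟨c₂, hc₂⟩ := hx b
    obtain ⟨c₃, hc₃⟩ := hy b
    exact ⟨c₁ + c₂ + c₃, by rw [star_circ, hc₁, hc₂, hc₃, smul_add, smul_add]⟩
  | inv x _ hx =>
    obtain ⟨c₁, hc₁⟩ := hx (star (inv x) b)
    obtain ⟨c₂, hc₂⟩ := hx b
    have h := star_circ x (inv x) b
    rw [circ_inv, zero_star, hc₁, hc₂] at h
    exact ⟨-(c₁ + c₂), by rw [smul_neg, smul_add]; exact eq_neg_of_add_eq_zero_right h.symm⟩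

end LeftBrace

open LeftBrace in
theorem smul_isIdeal_eq_circPowers_general (p n : ℕ) (hp : p.Prime) (hpn : n + 1 < p)
    (A : Type*) [LeftBrace A] (hcard : Nat.card A = p ^ n) (i : ℕ) :
    IsIdeal {x : A | ∃ a : A, x = p ^ i • a} ∧
    {x : A | ∃ a : A, x = p ^ i • a} =
      {x : A | circClosure {y : A | ∃ a : A, y = circPow a (p ^ i)} x} := by
  have hn : n < p := by omega
  have hA : fixSeries A n = ⊤ := fixSeries_eq_top hp hcard
  have hright : ∀ (b : A) (a : A), ∃ c, star (p ^ i • a) b = p ^ i • c := fun b a =>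
    exists_star_eq_smul_of_circClosure hp hn hA i (circClosure_circPowers_smul hp hn hA i a) b
  refine ⟨⟨⟨0, (smul_zero _).symm⟩, ?_, ?_, ?_, ?_, ?_⟩,
    Set.ext fun x => ⟨?_, exists_eq_smul_of_circClosure hp hn hA i⟩⟩
  · rintro _ ⟨a, rfl⟩ _ ⟨b, rfl⟩
    exact ⟨a + b, (smul_add _ _ _).symm⟩
  · rintro _ ⟨a, rfl⟩
    exact ⟨-a, (smul_neg _ _).symm⟩
  · rintro b _ ⟨a, rfl⟩
    exact ⟨star b a, star_nsmul _ _ _⟩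
  · rintro b _ ⟨a, rfl⟩
    exact hright b a
  · rintro b _ ⟨a, rfl⟩
    obtain ⟨c, hc⟩ := hright (inv b) a
    exact ⟨lam b a + lam b c, by rw [circ_circ_inv, hc, map_nsmul, map_nsmul, smul_add]⟩
  · rintro ⟨a, rfl⟩
    exact circClosure_circPowers_smul hp hn hA i a

open LeftBrace in
/-- in a left brace of cardinality `p^n` with `p > n+1` prime, the
subset `p^i·A` is an ideal, and it coincides with the subgroup of `(A,∘)`
generated by the `p^i`-th `∘`-powers. -/
theorem smul_isIdeal_eq_circPowers (p n : ℕ) (hp : p.Prime) (hpn : n + 1 < p)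
    (A : Type*) [LeftBrace A] [Fintype A] (hcard : Nat.card A = p ^ n) (i : ℕ) :
    IsIdeal {x : A | ∃ a : A, x = p ^ i • a} ∧
    {x : A | ∃ a : A, x = p ^ i • a} =
      {x : A | circClosure {y : A | ∃ a : A, y = circPow a (p ^ i)} x} :=
  smul_isIdeal_eq_circPowers_general p n hp hpn A hcard i
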